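/- arXiv:2510.16900 — 3 statements merged into one kernel-verified Lean document; each statement's English description precedes it below -/
import Mathlib

section
/- For every n ≥ 1 and μ ≥ 1, the function λ ↦ |ln( |1 - e^{-iλμ}|^{2n} / λ^{2n} )| is integrable on [-π, π]. -/
/-!
After `log (a ^ k / b ^ k) = k * log (a / b)`, the integrand is `2n * |log ‖f λ‖|` for the
real-meromorphic function `f λ = (1 - e^{-iλμ}) / λ`, and `log ‖f‖` is interval integrable for
every meromorphic `f`: its singularities at the zeros and poles of `f` are logarithmic.
-/

open Complex MeasureTheory Interval

theorem Real.log_pow_div_pow (a b : ℝ) (k : ℕ) :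
    Real.log (a ^ k / b ^ k) = k * Real.log (a / b) := by
  rw [← div_pow, Real.log_pow]

theorem Complex.log_norm_div_ofReal (z : ℂ) (x : ℝ) : Real.log (‖z‖ / x) = Real.log ‖z / x‖ := by
  rw [norm_div, norm_real, Real.norm_eq_abs, ← Real.log_abs, abs_div, abs_norm]

theorem meromorphicOn_one_sub_exp_mul_I_div (μ : ℝ) (s : Set ℝ) :
    MeromorphicOn (fun l : ℝ => (1 - cexp (-(l * μ) * I)) / l) s := by
  have hnum : AnalyticOnNhd ℝ (fun l : ℝ => 1 - cexp (-(l * μ) * I)) s := fun x _ =>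
    (show AnalyticAt ℂ (fun z : ℂ => 1 - cexp (-(z * μ) * I)) x by fun_prop).restrictScalars.comp
      (ofRealCLM.analyticAt x)
  have hden : AnalyticOnNhd ℝ (fun l : ℝ => (l : ℂ)) s := fun x _ => ofRealCLM.analyticAt x
  exact hnum.meromorphicOn.div hden.meromorphicOn

theorem log_ratio_integrable_general (n μ : ℕ) :
    MeasureTheory.IntegrableOn
      (fun l : ℝ =>
        |Real.log (‖1 - Complex.exp (-(l * (μ : ℝ)) * Complex.I)‖ ^ (2 * n) / l ^ (2 * n))|)
      (Set.Icc (-Real.pi) Real.pi) := by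
  simp_rw [Real.log_pow_div_pow, Complex.log_norm_div_ofReal]
  rw [← intervalIntegrable_iff_integrableOn_Icc_of_le (by linarith [Real.pi_pos])]
  exact ((meromorphicOn_one_sub_exp_mul_I_div μ _).intervalIntegrable_log_norm.const_mul _).abs

/-- λ ↦ |ln(|1 - e^{-iλμ}|^{2n} / λ^{2n})| is integrable on [-π, π]. -/
theorem log_ratio_integrable (n μ : ℕ) (hn : 1 ≤ n) (hμ : 1 ≤ μ) :
    MeasureTheory.IntegrableOn
      (fun l : ℝ =>
        |Real.log (‖1 - Complex.exp (-(l * (μ : ℝ)) * Complex.I)‖ ^ (2 * n) / l ^ (2 * n))|)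
      (Set.Icc (-Real.pi) Real.pi) :=
  log_ratio_integrable_general n μ
end

section
/- Let x, y ∈ ℝ with x·y ≠ 0 and P₀ > 0. The maximum of F(u,v) = (xu + yv)² + y²u² over the disk u² + v² ≤ P₀ equals P₀·(x² + 2y² + √(x²(x² + 4y²)))/2, and is attained at (u,v) with u² = P₀(x² + 4y² + √(x²(x²+4y²)))/(2(x²+4y²)) and v² = P₀(x² + 4y² − √(x²(x²+4y²)))/(2(x²+4y²)), with sign(uv) = sign(xy). -/
/-!
With `s = √(x²(x² + 4y²))`, the identity
`2(s + x²)(λ(u² + v²) - F(u, v)) = (2xyu - (s + x²)v)²`, where `λ = (x² + 2y² + s)/2`,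
shows that `F ≤ λ(u² + v²)` with equality exactly on the eigenvector line spanned by
`(s + x², 2xy)`. Scaling that eigenvector onto the circle `u² + v² = P₀` gives the maximiser.
-/

theorem Real.sign_mul_of_pos {c : ℝ} (hc : 0 < c) (r : ℝ) : Real.sign (c * r) = Real.sign r := by
  rcases lt_trichotomy r 0 with hr | rfl | hr
  · rw [Real.sign_of_neg (mul_neg_of_pos_of_neg hc hr), Real.sign_of_neg hr]
  · rw [mul_zero]
  · rw [Real.sign_of_pos (mul_pos hc hr), Real.sign_of_pos hr]

section TopEigenvalue

variable {x y s : ℝ}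

theorem two_mul_topEigenvalue_gap_eq_sq (hs : s ^ 2 = x ^ 2 * (x ^ 2 + 4 * y ^ 2)) (u v : ℝ) :
    2 * (s + x ^ 2) * ((x ^ 2 + 2 * y ^ 2 + s) / 2 * (u ^ 2 + v ^ 2) -
      ((x * u + y * v) ^ 2 + y ^ 2 * u ^ 2)) = (2 * x * y * u - (s + x ^ 2) * v) ^ 2 := by
  linear_combination u ^ 2 * hs

theorem quadratic_le_topEigenvalue_mul (hs : s ^ 2 = x ^ 2 * (x ^ 2 + 4 * y ^ 2))
    (hsx : 0 < s + x ^ 2) (u v : ℝ) :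
    (x * u + y * v) ^ 2 + y ^ 2 * u ^ 2 ≤ (x ^ 2 + 2 * y ^ 2 + s) / 2 * (u ^ 2 + v ^ 2) := by
  have hgap : 0 ≤ 2 * (s + x ^ 2) * ((x ^ 2 + 2 * y ^ 2 + s) / 2 * (u ^ 2 + v ^ 2) -
      ((x * u + y * v) ^ 2 + y ^ 2 * u ^ 2)) :=
    two_mul_topEigenvalue_gap_eq_sq hs u v ▸ sq_nonneg _
  linarith [nonneg_of_mul_nonneg_right hgap (by positivity)]

theorem quadratic_eq_topEigenvalue_mul (hs : s ^ 2 = x ^ 2 * (x ^ 2 + 4 * y ^ 2))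
    (hsx : s + x ^ 2 ≠ 0) {u v : ℝ} (heig : 2 * x * y * u = (s + x ^ 2) * v) :
    (x * u + y * v) ^ 2 + y ^ 2 * u ^ 2 = (x ^ 2 + 2 * y ^ 2 + s) / 2 * (u ^ 2 + v ^ 2) := by
  have hgap := two_mul_topEigenvalue_gap_eq_sq hs u v
  rw [heig, sub_self, zero_pow two_ne_zero, mul_eq_zero] at hgap
  linarith [hgap.resolve_left (mul_ne_zero two_ne_zero hsx)]

theorem exists_topEigenvector_sq_eq (hs : s ^ 2 = x ^ 2 * (x ^ 2 + 4 * y ^ 2)) (hs0 : 0 ≤ s)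
    (hx : x ≠ 0) {P₀ : ℝ} (hP : 0 < P₀) :
    ∃ u v : ℝ,
      u ^ 2 = P₀ * (x ^ 2 + 4 * y ^ 2 + s) / (2 * (x ^ 2 + 4 * y ^ 2)) ∧
      v ^ 2 = P₀ * (x ^ 2 + 4 * y ^ 2 - s) / (2 * (x ^ 2 + 4 * y ^ 2)) ∧
      Real.sign (u * v) = Real.sign (x * y) ∧
      2 * x * y * u = (s + x ^ 2) * v := by
  -- `2x²(x² + 4y² + s)` is the squared length of the eigenvector `(s + x², 2xy)`
  have hN : 0 < 2 * x ^ 2 * (x ^ 2 + 4 * y ^ 2 + s) := by positivity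
  set t := √(P₀ / (2 * x ^ 2 * (x ^ 2 + 4 * y ^ 2 + s)))
  have ht : t ^ 2 = P₀ / (2 * x ^ 2 * (x ^ 2 + 4 * y ^ 2 + s)) := Real.sq_sqrt (by positivity)
  have ht0 : 0 < t := Real.sqrt_pos.mpr (by positivity)
  refine ⟨t * (s + x ^ 2), t * (2 * x * y), ?_, ?_, ?_, by ring⟩
  · rw [mul_pow, ht, div_mul_eq_mul_div, div_eq_div_iff hN.ne' (by positivity)]
    linear_combination 2 * P₀ * (4 * y ^ 2) * hs
  · rw [mul_pow, ht, div_mul_eq_mul_div, div_eq_div_iff hN.ne' (by positivity)]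
    linear_combination 2 * P₀ * x ^ 2 * hs
  · have hc : 0 < 2 * t ^ 2 * (s + x ^ 2) := by positivity
    rw [show t * (s + x ^ 2) * (t * (2 * x * y)) = 2 * t ^ 2 * (s + x ^ 2) * (x * y) by ring,
      Real.sign_mul_of_pos hc]

end TopEigenvalue

/-- the maximum of (xu+yv)² + y²u² over the disk u²+v² ≤ P₀ and the
point where it is attained. -/
theorem quadratic_max_on_disk (x y P₀ : ℝ) (hxy : x * y ≠ 0) (hP : 0 < P₀) :
    IsGreatest {z : ℝ | ∃ u v : ℝ, u ^ 2 + v ^ 2 ≤ P₀ ∧ z = (x * u + y * v) ^ 2 + y ^ 2 * u ^ 2}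
      (P₀ * (x ^ 2 + 2 * y ^ 2 + Real.sqrt (x ^ 2 * (x ^ 2 + 4 * y ^ 2))) / 2) ∧
    ∃ u v : ℝ,
      u ^ 2 = P₀ * (x ^ 2 + 4 * y ^ 2 + Real.sqrt (x ^ 2 * (x ^ 2 + 4 * y ^ 2))) /
        (2 * (x ^ 2 + 4 * y ^ 2)) ∧
      v ^ 2 = P₀ * (x ^ 2 + 4 * y ^ 2 - Real.sqrt (x ^ 2 * (x ^ 2 + 4 * y ^ 2))) /
        (2 * (x ^ 2 + 4 * y ^ 2)) ∧
      Real.sign (u * v) = Real.sign (x * y) ∧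
      (x * u + y * v) ^ 2 + y ^ 2 * u ^ 2 =
        P₀ * (x ^ 2 + 2 * y ^ 2 + Real.sqrt (x ^ 2 * (x ^ 2 + 4 * y ^ 2))) / 2 := by
  have hx : x ≠ 0 := left_ne_zero_of_mul hxy
  set s := √(x ^ 2 * (x ^ 2 + 4 * y ^ 2))
  have hs : s ^ 2 = x ^ 2 * (x ^ 2 + 4 * y ^ 2) := Real.sq_sqrt (by positivity)
  have hsx : 0 < s + x ^ 2 := by positivity
  obtain ⟨u, v, hu, hv, hsign, heig⟩ := exists_topEigenvector_sq_eq hs (Real.sqrt_nonneg _) hx hP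
  have hA : x ^ 2 + 4 * y ^ 2 ≠ 0 := by positivity
  have hcircle : u ^ 2 + v ^ 2 = P₀ := by
    rw [hu, hv]
    field_simp
    ring
  have hval : (x * u + y * v) ^ 2 + y ^ 2 * u ^ 2 = P₀ * (x ^ 2 + 2 * y ^ 2 + s) / 2 := by
    rw [quadratic_eq_topEigenvalue_mul hs hsx.ne' heig, hcircle]
    ring
  refine ⟨⟨⟨u, v, hcircle.le, hval.symm⟩, ?_⟩, u, v, hu, hv, hsign, hval⟩
  rintro z ⟨a, b, hab, rfl⟩
  calc (x * a + y * b) ^ 2 + y ^ 2 * a ^ 2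
      ≤ (x ^ 2 + 2 * y ^ 2 + s) / 2 * (a ^ 2 + b ^ 2) := quadratic_le_topEigenvalue_mul hs hsx a b
    _ ≤ (x ^ 2 + 2 * y ^ 2 + s) / 2 * P₀ := by gcongr
    _ = P₀ * (x ^ 2 + 2 * y ^ 2 + s) / 2 := by ring
end

section
/- Let (ε_m)_{m∈ℤ} be orthonormal in a Hilbert space H, φ ∈ ℓ²(ℕ), and b : ℕ → ℝ satisfy ∑_{k}(k+1)|b(k)|² < ∞ and ∑_k |b(k)| < ∞. Define ζ(m) = ∑_{k≥0} φ(k)ε_{m-k} and Bζ = ∑_{m≥0} b(m) ζ(m). Then the squared distance from Bζ to the closed span of {ε_j : j ≤ -1} equals ∑_{j≥0} | ∑_{m≥0} b(m+j) φ(m) |², i.e. ‖Bζ − proj(Bζ)‖² = ‖B φ‖² where B is the Hankel operator (Bφ)_j = ∑_{m≥0} b(m+j)φ(m). -/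
/-!
Split `ζ(m)` into its component `∑_{i ≤ m} φ(m - i) ε_i` on the present and future innovations
and its component in the past `S`. Summed against `b`, the first parts give a vector `u` in the
closed span of `(ε_j)_{j ≥ 0}`, hence orthogonal to `S`, while the second parts stay in the closed
subspace `S`; so `Bζ - proj_S(Bζ) = u`. The `j`-th coordinate of `u` is
`∑_m b(m) φ(m - j) = ∑_m b(m + j) φ(m)`, and Parseval in the closed span gives `‖u‖²`.
-/

open scoped RealInnerProductSpace
open Finset Submodule

section Orthonormal

variable {ι H : Type*} [NormedAddCommGroup H] [InnerProductSpace ℝ H] [CompleteSpace H]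
  {e : ι → H}

theorem Orthonormal.summable_smul (he : Orthonormal ℝ e) {c : ι → ℝ}
    (hc : Summable fun i => c i ^ 2) : Summable fun i => c i • e i := by
  simpa using (he.orthogonalFamily.summable_iff_norm_sq_summable c).2 (by simpa using hc)

theorem Orthonormal.inner_tsum_smul (he : Orthonormal ℝ e) {c : ι → ℝ}
    (hc : Summable fun i => c i ^ 2) (j : ι) : ⟪e j, ∑' i, c i • e i⟫ = c j := by
  classical
  rw [← innerSL_apply_apply, (innerSL ℝ (e j)).map_tsum (he.summable_smul hc)]
  simp [orthonormal_iff_ite.mp he, eq_comm (a := j)]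

theorem Orthonormal.norm_tsum_smul_sq (he : Orthonormal ℝ e) {c : ι → ℝ}
    (hc : Summable fun i => c i ^ 2) : ‖∑' i, c i • e i‖ ^ 2 = ∑' i, c i ^ 2 := by
  rw [← real_inner_self_eq_norm_sq, ← innerSL_apply_apply,
    (innerSL ℝ _).map_tsum (he.summable_smul hc)]
  refine tsum_congr fun i => ?_
  rw [innerSL_apply_apply, real_inner_smul_right, real_inner_comm, he.inner_tsum_smul hc, sq]

theorem Orthonormal.norm_sq_eq_tsum_inner_sq (he : Orthonormal ℝ e) {x : H}
    (hx : x ∈ (span ℝ (Set.range e)).topologicalClosure) : ‖x‖ ^ 2 = ∑' i, ⟪e i, x⟫ ^ 2 := by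
  have hc : Summable fun i => ⟪e i, x⟫ ^ 2 := by simpa using he.inner_products_summable (x := x)
  set w := ∑' i, ⟪e i, x⟫ • e i
  have hw : w ∈ (span ℝ (Set.range e)).topologicalClosure :=
    tsum_mem (isClosed_topologicalClosure _) fun i =>
      smul_mem _ _ (le_topologicalClosure _ (subset_span (Set.mem_range_self i)))
  have hxw_orth : x - w ∈ (span ℝ (Set.range e)).topologicalClosureᗮ := by
    rw [orthogonal_closure]
    refine (isOrtho_span.2 ?_).le (subset_span rfl)
    rintro _ rfl _ ⟨i, rfl⟩
    rw [real_inner_comm, inner_sub_right, he.inner_tsum_smul hc, sub_self]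
  have hxw : x = w := sub_eq_zero.mp <|
    inner_self_eq_zero.mp (inner_right_of_mem_orthogonal (sub_mem hx hw) hxw_orth)
  conv_lhs => rw [hxw]
  exact he.norm_tsum_smul_sq hc

end Orthonormal

theorem summable_smul_of_norm_le {ι E : Type*} [NormedAddCommGroup E] [NormedSpace ℝ E]
    [CompleteSpace E] {b : ι → ℝ} (hb : Summable fun i => |b i|) {f : ι → E} {C : ℝ}
    (hf : ∀ i, ‖f i‖ ≤ C) : Summable fun i => b i • f i :=
  (hb.mul_right C).of_norm_bounded fun i => by
    rw [norm_smul, Real.norm_eq_abs]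
    exact mul_le_mul_of_nonneg_left (hf i) (abs_nonneg _)

section MovingAverage

variable {H : Type*} [NormedAddCommGroup H] [InnerProductSpace ℝ H] {ε : ℤ → H}

noncomputable def futurePart (ε : ℤ → H) (φ : ℕ → ℝ) (m : ℕ) : H :=
  ∑ i ∈ range (m + 1), φ (m - i) • ε i

noncomputable def pastPart (ε : ℤ → H) (φ : ℕ → ℝ) (m : ℕ) : H :=
  ∑' k : ℕ, φ (k + (m + 1)) • ε (-((k : ℤ) + 1))

theorem Orthonormal.comp_sub_natCast (hε : Orthonormal ℝ ε) (m : ℤ) :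
    Orthonormal ℝ fun k : ℕ => ε (m - k) :=
  hε.comp _ fun a b h => by simpa using h

theorem tsum_smul_sub_eq_futurePart_add_pastPart [CompleteSpace H] (hε : Orthonormal ℝ ε)
    {φ : ℕ → ℝ} (hφ : Summable fun k => φ k ^ 2) (m : ℕ) :
    ∑' k : ℕ, φ k • ε (m - k) = futurePart ε φ m + pastPart ε φ m := by
  rw [← ((hε.comp_sub_natCast m).summable_smul hφ).sum_add_tsum_nat_add (m + 1), futurePart,
    pastPart, ← sum_range_reflect]
  congr 1
  · refine sum_congr rfl fun i hi => ?_
    have hi : i ≤ m := Nat.lt_succ_iff.mp (mem_range.mp hi)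
    rw [Nat.add_sub_cancel, Nat.cast_sub hi, sub_sub_cancel]
  · refine tsum_congr fun k => ?_
    congr 2
    push_cast
    ring

theorem norm_tsum_smul_sub [CompleteSpace H] (hε : Orthonormal ℝ ε) {φ : ℕ → ℝ}
    (hφ : Summable fun k => φ k ^ 2) (m : ℤ) :
    ‖∑' k : ℕ, φ k • ε (m - k)‖ = √(∑' k, φ k ^ 2) := by
  rw [← (hε.comp_sub_natCast m).norm_tsum_smul_sq hφ, Real.sqrt_sq (norm_nonneg _)]

theorem futurePart_mem_span (ε : ℤ → H) (φ : ℕ → ℝ) (m : ℕ) :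
    futurePart ε φ m ∈ span ℝ (Set.range fun i : ℕ => ε i) :=
  sum_mem fun i _ => smul_mem _ _ (subset_span (Set.mem_range_self i))

theorem pastPart_mem (ε : ℤ → H) (φ : ℕ → ℝ) (m : ℕ) :
    pastPart ε φ m ∈ (span ℝ (ε '' {j | j ≤ -1})).topologicalClosure :=
  tsum_mem (isClosed_topologicalClosure _) fun k => smul_mem _ _ <|
    le_topologicalClosure _ <| subset_span ⟨_, by simp only [Set.mem_ofPred_eq]; omega, rfl⟩

theorem span_future_le_orthogonal_past (hε : Orthonormal ℝ ε) :
    span ℝ (Set.range fun i : ℕ => ε i) ≤ (span ℝ (ε '' {j | j ≤ -1})).topologicalClosureᗮ := by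
  rw [orthogonal_closure]
  refine isOrtho_span.2 ?_
  rintro _ ⟨i, rfl⟩ _ ⟨j, hj, rfl⟩
  exact hε.inner_eq_zero (by simp only [Set.mem_ofPred_eq] at hj; omega)

theorem inner_futurePart (hε : Orthonormal ℝ ε) (φ : ℕ → ℝ) (j m : ℕ) :
    ⟪ε j, futurePart ε φ m⟫ = if j ≤ m then φ (m - j) else 0 := by
  split_ifs with h
  · exact (hε.comp _ Nat.cast_injective).inner_right_sum (fun i => φ (m - i))
      (mem_range.2 (Nat.lt_succ_of_le h))
  · refine (inner_sum _ _ _).trans (sum_eq_zero fun i hi => ?_)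
    have hji : (j : ℤ) ≠ i := by have := mem_range.1 hi; omega
    rw [real_inner_smul_right, hε.inner_eq_zero hji, mul_zero]

theorem norm_futurePart_le [CompleteSpace H] (hε : Orthonormal ℝ ε) {φ : ℕ → ℝ}
    (hφ : Summable fun k => φ k ^ 2) (m : ℕ) : ‖futurePart ε φ m‖ ≤ √(∑' k, φ k ^ 2) := by
  have horth : ⟪futurePart ε φ m, pastPart ε φ m⟫ = 0 :=
    inner_left_of_mem_orthogonal (pastPart_mem ε φ m)
      (span_future_le_orthogonal_past hε (futurePart_mem_span ε φ m))
  rw [← norm_tsum_smul_sub hε hφ m, tsum_smul_sub_eq_futurePart_add_pastPart hε hφ m]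
  have := norm_add_sq_eq_norm_sq_add_norm_sq_real horth
  nlinarith [norm_nonneg (futurePart ε φ m), norm_nonneg (futurePart ε φ m + pastPart ε φ m)]

theorem inner_tsum_smul_futurePart [CompleteSpace H] (hε : Orthonormal ℝ ε)
    {φ : ℕ → ℝ} (hφ : Summable fun k => φ k ^ 2) {b : ℕ → ℝ} (hb : Summable fun m => |b m|)
    (j : ℕ) : ⟪ε j, ∑' m, b m • futurePart ε φ m⟫ = ∑' m, b (m + j) * φ m := by
  rw [← innerSL_apply_apply,
    (innerSL ℝ (ε j)).map_tsum (summable_smul_of_norm_le hb (norm_futurePart_le hε hφ))]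
  simp_rw [innerSL_apply_apply, real_inner_smul_right, inner_futurePart hε]
  rw [← (add_left_injective j).tsum_eq]
  · simp
  · intro m hm
    have hjm : j ≤ m := by by_contra h; simp [h] at hm
    exact ⟨m - j, Nat.sub_add_cancel hjm⟩

end MovingAverage

theorem functional_prediction_error_general {H : Type*} [NormedAddCommGroup H]
    [InnerProductSpace ℝ H] [CompleteSpace H]
    (ε : ℤ → H) (hε : Orthonormal ℝ ε) (φ : ℕ → ℝ) (hφ : Summable fun k => (φ k) ^ 2)
    (b : ℕ → ℝ) (hb1 : Summable fun k => |b k|)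
    (S : Submodule ℝ H)
    (hS : S = (Submodule.span ℝ (ε '' {j : ℤ | j ≤ -1})).topologicalClosure)
    [S.HasOrthogonalProjection] :
    ‖(∑' m : ℕ, b m • ∑' k : ℕ, φ k • ε ((m : ℤ) - (k : ℤ))) -
        (S.orthogonalProjectionOnto
          (∑' m : ℕ, b m • ∑' k : ℕ, φ k • ε ((m : ℤ) - (k : ℤ))) : H)‖ ^ 2 =
      ∑' j : ℕ, (∑' m : ℕ, b (m + j) * φ m) ^ 2 := by
  set x := ∑' m : ℕ, b m • ∑' k : ℕ, φ k • ε ((m : ℤ) - (k : ℤ))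
  set u := ∑' m, b m • futurePart ε φ m
  have hx_summable : Summable fun m : ℕ => b m • ∑' k : ℕ, φ k • ε ((m : ℤ) - (k : ℤ)) :=
    summable_smul_of_norm_le hb1 fun m => (norm_tsum_smul_sub hε hφ m).le
  have hu_summable : Summable fun m => b m • futurePart ε φ m :=
    summable_smul_of_norm_le hb1 (norm_futurePart_le hε hφ)
  have hxu : x - u ∈ S := by
    rw [← hx_summable.tsum_sub hu_summable, hS]
    refine tsum_mem (isClosed_topologicalClosure _) fun m => ?_
    rw [tsum_smul_sub_eq_futurePart_add_pastPart hε hφ, ← smul_sub, add_sub_cancel_left]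
    exact smul_mem _ _ (pastPart_mem ε φ m)
  have huS : u ∈ Sᗮ := hS ▸ tsum_mem (isClosed_orthogonal _) fun m =>
    smul_mem _ _ (span_future_le_orthogonal_past hε (futurePart_mem_span ε φ m))
  have hu_closure : u ∈ (span ℝ (Set.range fun i : ℕ => ε i)).topologicalClosure :=
    tsum_mem (isClosed_topologicalClosure _) fun m =>
      smul_mem _ _ (le_topologicalClosure _ (futurePart_mem_span ε φ m))
  rw [← starProjection_apply,
    eq_starProjection_of_mem_orthogonal' hxu huS (sub_add_cancel x u).symm, sub_sub_cancel,
    (hε.comp _ Nat.cast_injective).norm_sq_eq_tsum_inner_sq hu_closure]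
  exact tsum_congr fun j => by rw [Function.comp_apply, inner_tsum_smul_futurePart hε hφ hb1]

/-- the squared distance of Bζ = ∑_{m≥0} b(m) ζ(m) from the closed span of
{ε_j : j ≤ -1} equals ‖Bφ‖² = ∑_j |∑_m b(m+j) φ(m)|², where B is the Hankel operator. -/
theorem functional_prediction_error {H : Type*} [NormedAddCommGroup H]
    [InnerProductSpace ℝ H] [CompleteSpace H]
    (ε : ℤ → H) (hε : Orthonormal ℝ ε) (φ : ℕ → ℝ) (hφ : Summable fun k => (φ k) ^ 2)
    (b : ℕ → ℝ) (hb1 : Summable fun k => |b k|)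
    (hb2 : Summable fun k => (((k : ℕ) + 1 : ℕ) : ℝ) * (b k) ^ 2)
    (S : Submodule ℝ H)
    (hS : S = (Submodule.span ℝ (ε '' {j : ℤ | j ≤ -1})).topologicalClosure)
    [S.HasOrthogonalProjection] :
    ‖(∑' m : ℕ, b m • ∑' k : ℕ, φ k • ε ((m : ℤ) - (k : ℤ))) -
        (S.orthogonalProjectionOnto
          (∑' m : ℕ, b m • ∑' k : ℕ, φ k • ε ((m : ℤ) - (k : ℤ))) : H)‖ ^ 2 =
      ∑' j : ℕ, (∑' m : ℕ, b (m + j) * φ m) ^ 2 :=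
  functional_prediction_error_general ε hε φ hφ b hb1 S hS
end
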